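/- Fix N ∈ ℕ, j ∈ {1,…,N}, T > 0, L ≥ 0, and measurable a^i, c^{i,k} : [0,T] → ℝ with |a^i(r)| ≤ L and |c^{i,k}(r)| ≤ L for all i,k,r. (1) If p¹,…,p^N : [0,T] → ℝ are continuous with p^i(t) = 1_{i=j} + ∫₀ᵗ ( a^i(r) p^i(r) + N^{−1} ∑_{k=1}^N c^{i,k}(r) p^k(r) ) dr, then there is C = C(L,T) such that |p^i(t)| ≤ C(1_{i=j} + 1/N) for all i and t. (2) If furthermore q¹,…,q^N : [0,T] → ℝ are continuous with q^i(t) = ∫₀ᵗ ( F^i(r) + a^i(r) q^i(r) + N^{−1} ∑_{k=1}^N c^{i,k}(r) q^k(r) ) dr, where the F^i are measurable and satisfy |F^i(r)| ≤ L(|p^i(r)| + N^{−1}∑_{k=1}^N |p^k(r)|)², then there is C' = C'(L,T) such that |q^i(t)| ≤ C'(1_{i=j} + 1/N) for all i and t. -/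

import Mathlib

/-!
Put `Wᵢ = |uᵢ| + N⁻¹ ∑ₖ |uₖ|`. The coupling term `N⁻¹ ∑ₖ cᵢₖ uₖ` is bounded by `L` times the
mean `N⁻¹ ∑ₖ |uₖ|`, and averaging the equations over `i` shows that this mean grows at rate at
most `2L`. Hence every `Wᵢ` obeys the scalar inequality `Wᵢ ≤ Wᵢ(0) + T·(source) + 3L ∫ Wᵢ`, and
Grönwall gives `|uᵢ| ≤ Wᵢ ≤ e^{3LT} · (data)`. For `p` the data are exactly `𝟙{i = j} + 1/N`.
For `q` the first bound makes the source at most a multiple of `(𝟙{i = j} + 1/N)²`, which is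
`≤ 2 (𝟙{i = j} + 1/N)`, so the same estimate applies.
-/

open MeasureTheory Set intervalIntegral Real

theorem le_mul_exp_of_le_add_mul_integral {f : ℝ → ℝ} {A B T : ℝ} (hB : 0 ≤ B)
    (hf : ContinuousOn f (Icc 0 T))
    (h : ∀ t ∈ Icc 0 T, f t ≤ A + B * ∫ r in (0 : ℝ)..t, f r) :
    ∀ t ∈ Icc 0 T, f t ≤ A * exp (B * t) := by
  set G : ℝ → ℝ := fun t => A + B * ∫ r in (0 : ℝ)..t, f r
  have hG : ∀ t ∈ Icc 0 T, HasDerivWithinAt G (B * f t) (Icc 0 T) t := by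
    intro t ht
    have : Fact (t ∈ Icc 0 T) := ⟨ht⟩
    refine ((integral_hasDerivWithinAt_right ?_
      (hf.stronglyMeasurableAtFilter_nhdsWithin measurableSet_Icc t) (hf t ht)).const_mul
        B).const_add A
    exact (hf.mono (uIcc_subset_Icc ⟨le_rfl, ht.1.trans ht.2⟩ ht)).intervalIntegrable
  have hGle := le_gronwallBound_of_liminf_deriv_right_le (f := G) (δ := A) (ε := 0)
    (fun t ht => (hG t ht).continuousWithinAt)
    (fun t ht r hr => ((hG t (Ico_subset_Icc_self ht)).mono_of_mem_nhdsWithin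
      (Icc_mem_nhdsGE_of_mem ht)).liminf_right_slope_le hr)
    (by simp [G])
    (fun t ht => by simpa using mul_le_mul_of_nonneg_left (h t (Ico_subset_Icc_self ht)) hB)
  intro t ht
  simpa [gronwallBound_ε0] using (h t ht).trans (hGle t ht)

theorem abs_le_add_integral_of_eq {u H β : ℝ → ℝ} {u₀ t : ℝ} (ht : 0 ≤ t)
    (hβ : IntervalIntegrable β volume 0 t) (hH : ∀ r ∈ Ioc 0 t, |H r| ≤ β r)
    (heq : u t = u₀ + ∫ r in (0 : ℝ)..t, H r) :
    |u t| ≤ |u₀| + ∫ r in (0 : ℝ)..t, β r := by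
  have hint : ‖∫ r in (0 : ℝ)..t, H r‖ ≤ ∫ r in (0 : ℝ)..t, β r :=
    norm_integral_le_of_norm_le ht (ae_of_all _ hH) hβ
  rw [heq]
  exact (abs_add_le _ _).trans (add_le_add_right hint _)

theorem abs_add_mul_add_mul_sum_le {ι : Type*} [Fintype ι] {L ε α x G g : ℝ}
    {γ y : ι → ℝ} (hε : 0 ≤ ε) (hα : |α| ≤ L) (hγ : ∀ k, |γ k| ≤ L) (hG : |G| ≤ g) :
    |G + α * x + ε * ∑ k, γ k * y k| ≤ g + L * |x| + L * (ε * ∑ k, |y k|) := by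
  have hsum : |∑ k, γ k * y k| ≤ L * ∑ k, |y k| := by
    rw [Finset.mul_sum]
    refine (Finset.abs_sum_le_sum_abs _ _).trans (Finset.sum_le_sum fun k _ => ?_)
    rw [abs_mul]
    exact mul_le_mul_of_nonneg_right (hγ k) (abs_nonneg _)
  calc |G + α * x + ε * ∑ k, γ k * y k|
      ≤ |G| + |α * x| + |ε * ∑ k, γ k * y k| := abs_add_three _ _ _
    _ = |G| + |α| * |x| + ε * |∑ k, γ k * y k| := by rw [abs_mul, abs_mul, abs_of_nonneg hε]
    _ ≤ g + L * |x| + ε * (L * ∑ k, |y k|) := by gcongr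
    _ = g + L * |x| + L * (ε * ∑ k, |y k|) := by ring

noncomputable def kroneckerAddInv {N : ℕ} (j i : Fin N) : ℝ := (if i = j then 1 else 0) + 1 / N

section KroneckerAddInv

variable {N : ℕ} (j : Fin N)

theorem inv_le_kroneckerAddInv (i : Fin N) : (N : ℝ)⁻¹ ≤ kroneckerAddInv j i := by
  unfold kroneckerAddInv
  split_ifs <;> simp

theorem kroneckerAddInv_le_two (i : Fin N) : kroneckerAddInv j i ≤ 2 := by
  have : (N : ℝ)⁻¹ ≤ 1 := inv_le_one_of_one_le₀ (by exact_mod_cast Fin.pos j)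
  unfold kroneckerAddInv
  split_ifs <;> simp <;> linarith

theorem sum_kroneckerAddInv : ∑ i, kroneckerAddInv j i = 2 := by
  have : (N : ℝ) ≠ 0 := by exact_mod_cast (Fin.pos j).ne'
  simp [kroneckerAddInv, Finset.sum_add_distrib, this]
  norm_num

theorem abs_add_mean_abs_le_kroneckerAddInv {C : ℝ} {x : Fin N → ℝ} (hC : 0 ≤ C)
    (hx : ∀ k, |x k| ≤ C * kroneckerAddInv j k) (i : Fin N) :
    |x i| + (N : ℝ)⁻¹ * ∑ k, |x k| ≤ 3 * C * kroneckerAddInv j i :=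
  calc |x i| + (N : ℝ)⁻¹ * ∑ k, |x k|
      ≤ C * kroneckerAddInv j i + (N : ℝ)⁻¹ * ∑ k, C * kroneckerAddInv j k := by
        gcongr with k
        exacts [hx i, hx k]
    _ = C * kroneckerAddInv j i + (N : ℝ)⁻¹ * (C * 2) := by
        rw [← Finset.mul_sum, sum_kroneckerAddInv]
    _ ≤ C * kroneckerAddInv j i + kroneckerAddInv j i * (C * 2) := by
        gcongr
        exact inv_le_kroneckerAddInv j i
    _ = 3 * C * kroneckerAddInv j i := by ring

end KroneckerAddInv

section MeanField

variable {N : ℕ} {L T : ℝ} {a G u : Fin N → ℝ → ℝ} {c : Fin N → Fin N → ℝ → ℝ}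
  {g u₀ : Fin N → ℝ} {j : Fin N}

theorem abs_add_mean_abs_le_add_integral (hL : 0 ≤ L)
    (ha : ∀ i, ∀ r ∈ Icc 0 T, |a i r| ≤ L) (hc : ∀ i k, ∀ r ∈ Icc 0 T, |c i k r| ≤ L)
    (hG : ∀ i, ∀ r ∈ Icc 0 T, |G i r| ≤ g i) (hg : ∀ i, 0 ≤ g i)
    (hu : ∀ i, ContinuousOn (u i) (Icc 0 T))
    (heq : ∀ i, ∀ t ∈ Icc 0 T, u i t = u₀ i + ∫ r in (0 : ℝ)..t,
      (G i r + a i r * u i r + (N : ℝ)⁻¹ * ∑ k, c i k r * u k r))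
    (i : Fin N) {t : ℝ} (ht : t ∈ Icc 0 T) :
    |u i t| + (N : ℝ)⁻¹ * ∑ k, |u k t| ≤
      (|u₀ i| + (N : ℝ)⁻¹ * ∑ k, |u₀ k| + T * (g i + (N : ℝ)⁻¹ * ∑ k, g k))
        + 3 * L * ∫ r in (0 : ℝ)..t, (|u i r| + (N : ℝ)⁻¹ * ∑ k, |u k r|) := by
  have hN : (N : ℝ)⁻¹ * N = 1 := inv_mul_cancel₀ (Nat.cast_ne_zero.2 (Fin.pos i).ne')
  have hsub : Icc 0 t ⊆ Icc 0 T := Icc_subset_Icc_right ht.2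
  set S : ℝ → ℝ := fun r => ∑ k, |u k r|
  set β : Fin N → ℝ → ℝ := fun k r => g k + L * |u k r| + L * ((N : ℝ)⁻¹ * S r)
  have hScont : ContinuousOn S (Icc 0 T) := continuousOn_finsetSum _ fun k _ => (hu k).abs
  have hβint : ∀ k, IntervalIntegrable (β k) volume 0 t := fun k =>
    (((continuousOn_const.add (continuousOn_const.mul (hu k).abs)).add
      (continuousOn_const.mul (continuousOn_const.mul hScont))).mono
      (uIcc_of_le ht.1 ▸ hsub)).intervalIntegrable
  have hWint : IntervalIntegrable (fun r => |u i r| + (N : ℝ)⁻¹ * S r) volume 0 t :=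
    (((hu i).abs.add (continuousOn_const.mul hScont)).mono
      (uIcc_of_le ht.1 ▸ hsub)).intervalIntegrable
  have hsumint : IntervalIntegrable (fun r => ∑ k, β k r) volume 0 t := by
    simpa only [Finset.sum_fn] using IntervalIntegrable.sum Finset.univ fun k _ => hβint k
  have hk : ∀ k, |u k t| ≤ |u₀ k| + ∫ r in (0 : ℝ)..t, β k r := fun k =>
    abs_le_add_integral_of_eq ht.1 (hβint k)
      (fun r hr => abs_add_mul_add_mul_sum_le (inv_nonneg.2 N.cast_nonneg)
        (ha k r (hsub (Ioc_subset_Icc_self hr))) (hc k · r (hsub (Ioc_subset_Icc_self hr)))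
        (hG k r (hsub (Ioc_subset_Icc_self hr))))
      (heq k t ht)
  have hsumβ : ∀ r, ∑ k, β k r = ∑ k, g k + 2 * L * S r := by
    intro r
    simp only [β, Finset.sum_add_distrib, ← Finset.mul_sum, Finset.sum_const, Finset.card_univ,
      Fintype.card_fin, nsmul_eq_mul]
    linear_combination L * S r * hN
  set κ := g i + (N : ℝ)⁻¹ * ∑ k, g k
  have hκ : 0 ≤ κ := add_nonneg (hg i) (mul_nonneg (inv_nonneg.2 N.cast_nonneg)
    (Finset.sum_nonneg fun k _ => hg k))
  calc |u i t| + (N : ℝ)⁻¹ * ∑ k, |u k t|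
      ≤ (|u₀ i| + ∫ r in (0 : ℝ)..t, β i r)
        + (N : ℝ)⁻¹ * ∑ k, (|u₀ k| + ∫ r in (0 : ℝ)..t, β k r) := by
        gcongr with k
        exacts [hk i, hk k]
    _ = (|u₀ i| + (N : ℝ)⁻¹ * ∑ k, |u₀ k|)
        + ∫ r in (0 : ℝ)..t, (β i r + (N : ℝ)⁻¹ * ∑ k, β k r) := by
        rw [integral_add (hβint i) (hsumint.const_mul _),
          intervalIntegral.integral_const_mul, integral_finsetSum fun k _ => hβint k,
          Finset.sum_add_distrib]
        ring
    _ ≤ (|u₀ i| + (N : ℝ)⁻¹ * ∑ k, |u₀ k|)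
        + ∫ r in (0 : ℝ)..t, (κ + 3 * L * (|u i r| + (N : ℝ)⁻¹ * S r)) := by
        gcongr
        refine integral_mono_on ht.1
          ((hβint i).add (hsumint.const_mul _))
          (intervalIntegrable_const.add (hWint.const_mul _)) fun r _ => ?_
        rw [hsumβ]
        linarith [mul_nonneg hL (abs_nonneg (u i r))]
    _ = (|u₀ i| + (N : ℝ)⁻¹ * ∑ k, |u₀ k|) + t * κ
        + 3 * L * ∫ r in (0 : ℝ)..t, (|u i r| + (N : ℝ)⁻¹ * S r) := by
        rw [integral_add intervalIntegrable_const (hWint.const_mul _),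
          intervalIntegral.integral_const, intervalIntegral.integral_const_mul, smul_eq_mul,
          sub_zero]
        ring
    _ ≤ _ := by gcongr; exact ht.2

theorem abs_le_of_meanField_volterra (hL : 0 ≤ L)
    (ha : ∀ i, ∀ r ∈ Icc 0 T, |a i r| ≤ L) (hc : ∀ i k, ∀ r ∈ Icc 0 T, |c i k r| ≤ L)
    (hG : ∀ i, ∀ r ∈ Icc 0 T, |G i r| ≤ g i) (hg : ∀ i, 0 ≤ g i)
    (hu : ∀ i, ContinuousOn (u i) (Icc 0 T))
    (heq : ∀ i, ∀ t ∈ Icc 0 T, u i t = u₀ i + ∫ r in (0 : ℝ)..t,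
      (G i r + a i r * u i r + (N : ℝ)⁻¹ * ∑ k, c i k r * u k r))
    (i : Fin N) {t : ℝ} (ht : t ∈ Icc 0 T) :
    |u i t| ≤ (|u₀ i| + (N : ℝ)⁻¹ * ∑ k, |u₀ k| + T * (g i + (N : ℝ)⁻¹ * ∑ k, g k))
      * exp (3 * L * T) := by
  have hW := le_mul_exp_of_le_add_mul_integral (by positivity)
    ((hu i).abs.add (continuousOn_const.mul (continuousOn_finsetSum _ fun k _ => (hu k).abs)))
    fun s hs => abs_add_mean_abs_le_add_integral hL ha hc hG hg hu heq i hs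
  have hA : 0 ≤ |u₀ i| + (N : ℝ)⁻¹ * ∑ k, |u₀ k| + T * (g i + (N : ℝ)⁻¹ * ∑ k, g k) := by
    have hκ : 0 ≤ g i + (N : ℝ)⁻¹ * ∑ k, g k :=
      add_nonneg (hg i) (mul_nonneg (by positivity) (Finset.sum_nonneg fun k _ => hg k))
    have := ht.1.trans ht.2
    positivity
  calc |u i t| ≤ |u i t| + (N : ℝ)⁻¹ * ∑ k, |u k t| := le_add_of_nonneg_right (by positivity)
    _ ≤ _ := hW t ht
    _ ≤ _ := by gcongr; exact ht.2

theorem abs_le_exp_mul_kroneckerAddInv {p : Fin N → ℝ → ℝ} (hL : 0 ≤ L)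
    (ha : ∀ i, ∀ r ∈ Icc 0 T, |a i r| ≤ L) (hc : ∀ i k, ∀ r ∈ Icc 0 T, |c i k r| ≤ L)
    (hp : ∀ i, ContinuousOn (p i) (Icc 0 T))
    (heq : ∀ i, ∀ t ∈ Icc 0 T, p i t = (if i = j then 1 else 0) + ∫ r in (0 : ℝ)..t,
      (a i r * p i r + (N : ℝ)⁻¹ * ∑ k, c i k r * p k r))
    (i : Fin N) {t : ℝ} (ht : t ∈ Icc 0 T) :
    |p i t| ≤ exp (3 * L * T) * kroneckerAddInv j i := by
  have h := abs_le_of_meanField_volterra (G := 0) (g := 0)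
    (u₀ := fun i => if i = j then 1 else 0) hL ha hc (by simp) (fun _ => le_rfl) hp
    (by simpa using heq) i ht
  simp only [apply_ite, abs_one, abs_zero, Finset.sum_ite_eq', Finset.mem_univ] at h
  simpa [kroneckerAddInv, mul_comm] using h

theorem abs_le_of_forced_kroneckerAddInv {C : ℝ} {p q F : Fin N → ℝ → ℝ} (hL : 0 ≤ L)
    (hC : 0 ≤ C)
    (ha : ∀ i, ∀ r ∈ Icc 0 T, |a i r| ≤ L) (hc : ∀ i k, ∀ r ∈ Icc 0 T, |c i k r| ≤ L)
    (hp : ∀ i, ∀ r ∈ Icc 0 T, |p i r| ≤ C * kroneckerAddInv j i)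
    (hq : ∀ i, ContinuousOn (q i) (Icc 0 T))
    (hF : ∀ i, ∀ r ∈ Icc 0 T, |F i r| ≤ L * (|p i r| + (N : ℝ)⁻¹ * ∑ k, |p k r|) ^ 2)
    (heq : ∀ i, ∀ t ∈ Icc 0 T, q i t = ∫ r in (0 : ℝ)..t,
      (F i r + a i r * q i r + (N : ℝ)⁻¹ * ∑ k, c i k r * q k r))
    (i : Fin N) {t : ℝ} (ht : t ∈ Icc 0 T) :
    |q i t| ≤ 54 * L * C ^ 2 * T * exp (3 * L * T) * kroneckerAddInv j i := by
  have hm0 : ∀ i, 0 ≤ kroneckerAddInv j i := fun i =>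
    (inv_nonneg.2 N.cast_nonneg).trans (inv_le_kroneckerAddInv j i)
  have hFm : ∀ i, ∀ r ∈ Icc 0 T, |F i r| ≤ 18 * L * C ^ 2 * kroneckerAddInv j i := by
    intro i r hr
    have hm2 := kroneckerAddInv_le_two j i
    have hslack : 0 ≤ L * C ^ 2 * kroneckerAddInv j i * (2 - kroneckerAddInv j i) := by
      have := hm0 i
      have := sub_nonneg.2 hm2
      positivity
    calc |F i r| ≤ L * (3 * C * kroneckerAddInv j i) ^ 2 := by
          refine (hF i r hr).trans ?_
          gcongr
          exact abs_add_mean_abs_le_kroneckerAddInv j hC (fun k => hp k r hr) i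
      _ ≤ 18 * L * C ^ 2 * kroneckerAddInv j i := by linear_combination 9 * hslack
  have h := abs_le_of_meanField_volterra (u₀ := 0) hL ha hc hFm
    (fun i => by have := hm0 i; positivity) hq (by simpa using heq) i ht
  simp only [Pi.zero_apply, abs_zero, Finset.sum_const_zero, mul_zero, zero_add,
    ← Finset.mul_sum, sum_kroneckerAddInv] at h
  have := ht.1.trans ht.2
  calc |q i t| ≤ T * (18 * L * C ^ 2 * kroneckerAddInv j i
        + (N : ℝ)⁻¹ * (18 * L * C ^ 2 * 2)) * exp (3 * L * T) := h
    _ ≤ T * (18 * L * C ^ 2 * kroneckerAddInv j i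
        + kroneckerAddInv j i * (18 * L * C ^ 2 * 2)) * exp (3 * L * T) := by
        gcongr
        exact inv_le_kroneckerAddInv j i
    _ = 54 * L * C ^ 2 * T * exp (3 * L * T) * kroneckerAddInv j i := by ring

end MeanField

theorem statement12_general (L T : ℝ) (hL : 0 ≤ L) :
    (∃ C : ℝ,
      ∀ (N : ℕ), 0 < N → ∀ (j : Fin N)
        (a : Fin N → ℝ → ℝ) (c : Fin N → Fin N → ℝ → ℝ),
        (∀ i, Measurable (a i)) →
        (∀ i k, Measurable (c i k)) →
        (∀ i, ∀ r ∈ Set.Icc (0 : ℝ) T, |a i r| ≤ L) →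
        (∀ i k, ∀ r ∈ Set.Icc (0 : ℝ) T, |c i k r| ≤ L) →
        ∀ (p : Fin N → ℝ → ℝ),
        (∀ i, ContinuousOn (p i) (Set.Icc 0 T)) →
        (∀ i, ∀ t ∈ Set.Icc (0 : ℝ) T,
          p i t = (if i = j then 1 else 0)
            + ∫ r in (0 : ℝ)..t, (a i r * p i r + (N : ℝ)⁻¹ * ∑ k, c i k r * p k r)) →
        ∀ i, ∀ t ∈ Set.Icc (0 : ℝ) T,
          |p i t| ≤ C * ((if i = j then 1 else 0) + 1 / N))
    ∧ (∃ C' : ℝ,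
      ∀ (N : ℕ), 0 < N → ∀ (j : Fin N)
        (a : Fin N → ℝ → ℝ) (c : Fin N → Fin N → ℝ → ℝ),
        (∀ i, Measurable (a i)) →
        (∀ i k, Measurable (c i k)) →
        (∀ i, ∀ r ∈ Set.Icc (0 : ℝ) T, |a i r| ≤ L) →
        (∀ i k, ∀ r ∈ Set.Icc (0 : ℝ) T, |c i k r| ≤ L) →
        ∀ (p : Fin N → ℝ → ℝ),
        (∀ i, ContinuousOn (p i) (Set.Icc 0 T)) →
        (∀ i, ∀ t ∈ Set.Icc (0 : ℝ) T,
          p i t = (if i = j then 1 else 0)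
            + ∫ r in (0 : ℝ)..t, (a i r * p i r + (N : ℝ)⁻¹ * ∑ k, c i k r * p k r)) →
        ∀ (q : Fin N → ℝ → ℝ) (F : Fin N → ℝ → ℝ),
        (∀ i, ContinuousOn (q i) (Set.Icc 0 T)) →
        (∀ i, Measurable (F i)) →
        (∀ i, ∀ r ∈ Set.Icc (0 : ℝ) T,
          |F i r| ≤ L * (|p i r| + (N : ℝ)⁻¹ * ∑ k, |p k r|) ^ 2) →
        (∀ i, ∀ t ∈ Set.Icc (0 : ℝ) T,
          q i t = ∫ r in (0 : ℝ)..t,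
            (F i r + a i r * q i r + (N : ℝ)⁻¹ * ∑ k, c i k r * q k r)) →
        ∀ i, ∀ t ∈ Set.Icc (0 : ℝ) T,
          |q i t| ≤ C' * ((if i = j then 1 else 0) + 1 / N)) := by
  refine ⟨⟨exp (3 * L * T), fun N _ j a c _ _ ha hc p hp hpeq i t ht =>
    abs_le_exp_mul_kroneckerAddInv hL ha hc hp hpeq i ht⟩, ?_⟩
  refine ⟨54 * L * exp (3 * L * T) ^ 2 * T * exp (3 * L * T),
    fun N _ j a c _ _ ha hc p hp hpeq q F hq _ hF hqeq i t ht => ?_⟩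
  have hpbound := fun k r (hr : r ∈ Icc 0 T) =>
    abs_le_exp_mul_kroneckerAddInv hL ha hc hp hpeq k hr
  exact abs_le_of_forced_kroneckerAddInv hL (exp_pos _).le ha hc hpbound hq hF hqeq i ht

/-- Lemma 5.5 mechanism: bounds on the first and second derivatives with
respect to the initial condition of particle `j`, formulated as deterministic linear
Volterra-type systems.  The constants depend only on `L` and `T`. -/
theorem statement12 (L T : ℝ) (hL : 0 ≤ L) (hT : 0 ≤ T) :
    (∃ C : ℝ,
      ∀ (N : ℕ), 0 < N → ∀ (j : Fin N)
        (a : Fin N → ℝ → ℝ) (c : Fin N → Fin N → ℝ → ℝ),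
        (∀ i, Measurable (a i)) →
        (∀ i k, Measurable (c i k)) →
        (∀ i, ∀ r ∈ Set.Icc (0 : ℝ) T, |a i r| ≤ L) →
        (∀ i k, ∀ r ∈ Set.Icc (0 : ℝ) T, |c i k r| ≤ L) →
        ∀ (p : Fin N → ℝ → ℝ),
        (∀ i, ContinuousOn (p i) (Set.Icc 0 T)) →
        (∀ i, ∀ t ∈ Set.Icc (0 : ℝ) T,
          p i t = (if i = j then 1 else 0)
            + ∫ r in (0 : ℝ)..t, (a i r * p i r + (N : ℝ)⁻¹ * ∑ k, c i k r * p k r)) →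
        ∀ i, ∀ t ∈ Set.Icc (0 : ℝ) T,
          |p i t| ≤ C * ((if i = j then 1 else 0) + 1 / N))
    ∧ (∃ C' : ℝ,
      ∀ (N : ℕ), 0 < N → ∀ (j : Fin N)
        (a : Fin N → ℝ → ℝ) (c : Fin N → Fin N → ℝ → ℝ),
        (∀ i, Measurable (a i)) →
        (∀ i k, Measurable (c i k)) →
        (∀ i, ∀ r ∈ Set.Icc (0 : ℝ) T, |a i r| ≤ L) →
        (∀ i k, ∀ r ∈ Set.Icc (0 : ℝ) T, |c i k r| ≤ L) →
        ∀ (p : Fin N → ℝ → ℝ),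
        (∀ i, ContinuousOn (p i) (Set.Icc 0 T)) →
        (∀ i, ∀ t ∈ Set.Icc (0 : ℝ) T,
          p i t = (if i = j then 1 else 0)
            + ∫ r in (0 : ℝ)..t, (a i r * p i r + (N : ℝ)⁻¹ * ∑ k, c i k r * p k r)) →
        ∀ (q : Fin N → ℝ → ℝ) (F : Fin N → ℝ → ℝ),
        (∀ i, ContinuousOn (q i) (Set.Icc 0 T)) →
        (∀ i, Measurable (F i)) →
        (∀ i, ∀ r ∈ Set.Icc (0 : ℝ) T,
          |F i r| ≤ L * (|p i r| + (N : ℝ)⁻¹ * ∑ k, |p k r|) ^ 2) →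
        (∀ i, ∀ t ∈ Set.Icc (0 : ℝ) T,
          q i t = ∫ r in (0 : ℝ)..t,
            (F i r + a i r * q i r + (N : ℝ)⁻¹ * ∑ k, c i k r * q k r)) →
        ∀ i, ∀ t ∈ Set.Icc (0 : ℝ) T,
          |q i t| ≤ C' * ((if i = j then 1 else 0) + 1 / N)) :=
  statement12_general L T hL
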